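/- Let n merchants be partitioned into K nonempty clusters with sizes n*_1,…,n*_K and n_min = min_k n*_k, and draw a simple random sample without replacement of size n_s. Then the probability that at least one cluster has no sampled merchant is at most K (1 − n_min/n)^{n_s}; equivalently, P(e*) ≥ 1 − K(1 − n_min/n)^{n_s}, where e* is the event that every cluster has at least one sampled merchant. -/

import Mathlib

open Finset

/-- Probability, under simple random sampling without replacement of a size-`ns` subset of
the `n` merchants (uniform over all such subsets), of an event `E` about the sampled set. -/
noncomputable def srsProb (n ns : ℕ) (E : Finset (Fin n) → Prop) : ℝ :=
  ((@Finset.filter _ (fun s => E s) (Classical.decPred _)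
      (Finset.powersetCard ns (Finset.univ : Finset (Fin n)))).card : ℝ) /
    ((Finset.powersetCard ns (Finset.univ : Finset (Fin n))).card : ℝ)

/-- Size of cluster `k` among the `n` merchants with labels `γ`. -/
noncomputable def clusterSize {n K : ℕ} (γ : Fin n → Fin K) (k : Fin K) : ℕ :=
  (Finset.univ.filter fun i => γ i = k).card

/-- Minimal cluster size `n_min = min_k n*_k`. -/
noncomputable def nMin {n K : ℕ} (γ : Fin n → Fin K) : ℕ := ⨅ k, clusterSize γ k

/-!
Union bound over the clusters. The sample misses a set `T` exactly when it is one of the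
`C(n - |T|, ns)` subsets of the complement, and
`C(n - t, r) / C(n, r) = ∏_{i < r} (n - t - i) / (n - i) ≤ ((n - t) / n) ^ r`
factor by factor, since `(n - t - i) n ≤ (n - i)(n - t)`.
-/

lemma Nat.sub_mul_le_sub_mul {m n : ℕ} (h : m ≤ n) (r : ℕ) : (m - r) * n ≤ (n - r) * m := by
  rw [Nat.sub_mul, Nat.sub_mul, Nat.mul_comm m n]
  exact Nat.sub_le_sub_left (Nat.mul_le_mul_left r h) _

lemma Nat.descFactorial_mul_pow_le {m n : ℕ} (h : m ≤ n) :
    ∀ r : ℕ, m.descFactorial r * n ^ r ≤ n.descFactorial r * m ^ r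
  | 0 => by simp
  | r + 1 => by
    calc m.descFactorial (r + 1) * n ^ (r + 1)
        = ((m - r) * n) * (m.descFactorial r * n ^ r) := by
          rw [Nat.descFactorial_succ, pow_succ]; ring
      _ ≤ ((n - r) * m) * (n.descFactorial r * m ^ r) :=
          Nat.mul_le_mul (Nat.sub_mul_le_sub_mul h r) (Nat.descFactorial_mul_pow_le h r)
      _ = n.descFactorial (r + 1) * m ^ (r + 1) := by
          rw [Nat.descFactorial_succ, pow_succ]; ring

lemma Nat.choose_mul_pow_le {m n : ℕ} (h : m ≤ n) (r : ℕ) :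
    m.choose r * n ^ r ≤ n.choose r * m ^ r := by
  have := Nat.descFactorial_mul_pow_le h r
  rw [Nat.descFactorial_eq_factorial_mul_choose, Nat.descFactorial_eq_factorial_mul_choose,
    mul_assoc, mul_assoc] at this
  exact Nat.le_of_mul_le_mul_left this r.factorial_pos

lemma Nat.choose_div_choose_le_div_pow {m n : ℕ} (h : m ≤ n) (r : ℕ) :
    (m.choose r : ℝ) / n.choose r ≤ ((m : ℝ) / n) ^ r := by
  rcases (n.choose r).eq_zero_or_pos with hzero | hpos
  · rw [hzero, Nat.cast_zero, div_zero]
    positivity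
  have hrn : r ≤ n := by
    by_contra! hnr
    exact hpos.ne' (Nat.choose_eq_zero_of_lt hnr)
  rcases n.eq_zero_or_pos with rfl | hn
  · obtain rfl : r = 0 := by omega
    simp
  rw [div_pow, div_le_div_iff₀ (by exact_mod_cast hpos) (by positivity), mul_comm ((m : ℝ) ^ r)]
  exact_mod_cast Nat.choose_mul_pow_le h r

section srsProb

variable {n ns : ℕ}

lemma srsProb_eq_card_div (E : Finset (Fin n) → Prop) [DecidablePred E] :
    srsProb n ns E = #{s ∈ powersetCard ns (univ : Finset (Fin n)) | E s} / n.choose ns := by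
  rw [srsProb, card_powersetCard, card_univ, Fintype.card_fin]
  congr

lemma srsProb_not (hns : ns ≤ n) (E : Finset (Fin n) → Prop) :
    srsProb n ns (fun s => ¬ E s) = 1 - srsProb n ns E := by
  classical
  have hpos : (0 : ℝ) < n.choose ns := by exact_mod_cast Nat.choose_pos hns
  rw [srsProb_eq_card_div, srsProb_eq_card_div, eq_sub_iff_add_eq, ← add_div,
    div_eq_one_iff_eq hpos.ne', ← Nat.cast_add, add_comm,
    card_filter_add_card_filter_not, card_powersetCard, card_univ, Fintype.card_fin]

lemma srsProb_exists_le_sum {ι : Type*} [Fintype ι] (E : ι → Finset (Fin n) → Prop) :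
    srsProb n ns (fun s => ∃ i, E i s) ≤ ∑ i, srsProb n ns (E i) := by
  classical
  simp only [srsProb_eq_card_div, ← sum_div]
  gcongr
  have hcover : {s ∈ powersetCard ns (univ : Finset (Fin n)) | ∃ i, E i s} ⊆
      univ.biUnion fun i => {s ∈ powersetCard ns (univ : Finset (Fin n)) | E i s} := by
    intro s hs
    obtain ⟨hs, i, hi⟩ := mem_filter.1 hs
    exact mem_biUnion.2 ⟨i, mem_univ i, mem_filter.2 ⟨hs, hi⟩⟩
  exact_mod_cast (card_le_card hcover).trans card_biUnion_le

lemma srsProb_disjoint_le {m : ℕ} (T : Finset (Fin n)) (hm : m ≤ #T) :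
    srsProb n ns (fun s => Disjoint s T) ≤ (1 - (m : ℝ) / n) ^ ns := by
  classical
  have hT : #T ≤ n := card_le_univ T |>.trans_eq (Fintype.card_fin n)
  have havoid :
      {s ∈ powersetCard ns (univ : Finset (Fin n)) | Disjoint s T} = powersetCard ns Tᶜ := by
    ext s
    simp [mem_powersetCard, subset_compl_iff_disjoint_right, and_comm]
  rw [srsProb_eq_card_div, havoid, card_powersetCard, card_compl, Fintype.card_fin]
  refine (Nat.choose_div_choose_le_div_pow (Nat.sub_le n #T) ns).trans ?_
  gcongr
  rw [Nat.cast_sub hT, sub_div]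
  gcongr
  exact div_self_le_one _

end srsProb

theorem srs_miss_prob_union_bound_general {n K ns : ℕ} (hns : ns ≤ n)
    (γ : Fin n → Fin K) :
    srsProb n ns (fun s => ¬ ∀ k : Fin K, ∃ i ∈ s, γ i = k) ≤
        (K : ℝ) * (1 - (nMin γ : ℝ) / (n : ℝ)) ^ ns ∧
      1 - (K : ℝ) * (1 - (nMin γ : ℝ) / (n : ℝ)) ^ ns ≤
        srsProb n ns (fun s => ∀ k : Fin K, ∃ i ∈ s, γ i = k) := by
  have hmiss : srsProb n ns (fun s => ¬ ∀ k : Fin K, ∃ i ∈ s, γ i = k) ≤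
      (K : ℝ) * (1 - (nMin γ : ℝ) / (n : ℝ)) ^ ns :=
    calc srsProb n ns (fun s => ¬ ∀ k : Fin K, ∃ i ∈ s, γ i = k)
        = srsProb n ns (fun s => ∃ k, Disjoint s ({i | γ i = k} : Finset (Fin n))) := by
          congr! with s
          simp [disjoint_left]
      _ ≤ ∑ k, srsProb n ns (fun s => Disjoint s ({i | γ i = k} : Finset (Fin n))) :=
          srsProb_exists_le_sum _
      _ ≤ ∑ _k : Fin K, (1 - (nMin γ : ℝ) / n) ^ ns :=
          sum_le_sum fun k _ => srsProb_disjoint_le _ (ciInf_le (OrderBot.bddBelow _) k)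
      _ = (K : ℝ) * (1 - (nMin γ : ℝ) / (n : ℝ)) ^ ns := by simp
  exact ⟨hmiss, by linarith [srsProb_not hns (fun s => ∀ k : Fin K, ∃ i ∈ s, γ i = k)]⟩

/-- under simple random sampling without replacement of `n_s` merchants out of
`n` merchants partitioned into `K` nonempty clusters with minimal cluster size `n_min`, the
probability that some cluster has no sampled merchant is at most `K (1 − n_min/n)^{n_s}`;
equivalently `P(e*) ≥ 1 − K (1 − n_min/n)^{n_s}`. -/
theorem srs_miss_prob_union_bound {n K ns : ℕ} (hK : 0 < K) (hns : ns ≤ n)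
    (γ : Fin n → Fin K) (hsurj : Function.Surjective γ) :
    srsProb n ns (fun s => ¬ ∀ k : Fin K, ∃ i ∈ s, γ i = k) ≤
        (K : ℝ) * (1 - (nMin γ : ℝ) / (n : ℝ)) ^ ns ∧
      1 - (K : ℝ) * (1 - (nMin γ : ℝ) / (n : ℝ)) ^ ns ≤
        srsProb n ns (fun s => ∀ k : Fin K, ∃ i ∈ s, γ i = k) :=
  srs_miss_prob_union_bound_general hns γ
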